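/- arXiv:2507.16348 — 3 statements merged into one kernel-verified Lean document; each statement's English description precedes it below -/
import Mathlib

section
/- With d^∞ and a as below, lim_{n→∞} ( ∫_0^1 log a(z; d^∞) dz + log(n−1) ) = 1; in particular, ∫_0^1 log a(z; d^∞) dz ∼ −log(n−1) as n → ∞. -/
open MeasureTheory Finset

/-- The function `a(z; d)` from the tournament model. -/
noncomputable def aFun (n : ℕ) (d : ℕ → ℝ) (z : ℝ) : ℝ :=
  ∑ r ∈ Finset.Icc 1 (n - 1),
    (r : ℝ) * ((n - 1).choose r : ℝ) * z ^ (n - r - 1) * (1 - z) ^ (r - 1) * d r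

/-- The asymptotic prize-differential schedule `d^∞_r = 1 / ((n-1) r)`. -/
noncomputable def dInfty (n : ℕ) : ℕ → ℝ :=
  fun r => 1 / (((n : ℝ) - 1) * (r : ℝ))

section Aux

open Real intervalIntegral Filter

lemma sum_ident (m : ℕ) {z : ℝ} (hz : z ≠ 1) :
    ∑ r ∈ Icc 1 m, ((m.choose r : ℝ)) * z ^ (m - r) * (1 - z) ^ (r - 1)
      = ∑ k ∈ range m, z ^ k := by
  have h1 : (1 : ℝ) - z ≠ 0 := sub_ne_zero.mpr (Ne.symm hz)
  apply mul_left_cancel₀ h1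
  have hR : (1 - z) * ∑ k ∈ range m, z ^ k = 1 - z ^ m := by
    linear_combination (-1 : ℝ) * geom_sum_mul z m
  rw [hR, Finset.mul_sum]
  have hL : ∀ r ∈ Icc 1 m,
      (1 - z) * ((m.choose r : ℝ) * z ^ (m - r) * (1 - z) ^ (r - 1))
        = (m.choose r : ℝ) * z ^ (m - r) * (1 - z) ^ r := by
    intro r hr
    have hr1 : 1 ≤ r := (mem_Icc.mp hr).1
    have hpow : (1 - z) * (1 - z) ^ (r - 1) = (1 - z) ^ r := by
      rw [← pow_succ']
      congr 1
      omega
    calc (1 - z) * ((m.choose r : ℝ) * z ^ (m - r) * (1 - z) ^ (r - 1))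
        = (m.choose r : ℝ) * z ^ (m - r) * ((1 - z) * (1 - z) ^ (r - 1)) := by ring
      _ = _ := by rw [hpow]
  rw [Finset.sum_congr rfl hL]
  have hbin := add_pow (1 - z) z m
  simp only [sub_add_cancel, one_pow] at hbin
  have hrange : range (m + 1) = insert 0 (Icc 1 m) := by
    ext x; simp [Nat.lt_succ_iff]; omega
  rw [hrange, Finset.sum_insert (by simp)] at hbin
  simp only [pow_zero, one_mul, Nat.sub_zero, Nat.choose_zero_right, Nat.cast_one, mul_one] at hbin
  have : ∑ r ∈ Icc 1 m, (1 - z) ^ r * z ^ (m - r) * (m.choose r : ℝ) = 1 - z ^ m := by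
    linarith [hbin]
  rw [← this]
  apply Finset.sum_congr rfl
  intro r _
  ring

lemma aFun_eq {n : ℕ} (hn : 2 ≤ n) {z : ℝ} (hz : z ≠ 1) :
    aFun n (dInfty n) z = (∑ k ∈ range (n - 1), z ^ k) / ((n : ℝ) - 1) := by
  have hm : 1 ≤ n - 1 := by omega
  have hcast : ((n : ℝ) - 1) = ((n - 1 : ℕ) : ℝ) := by
    push_cast [Nat.cast_sub (by omega : 1 ≤ n)]; ring
  have hmne : ((n - 1 : ℕ) : ℝ) ≠ 0 := by
    exact_mod_cast (by omega : (n - 1 : ℕ) ≠ 0)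
  rw [aFun, hcast, ← sum_ident (n - 1) hz, Finset.sum_div]
  apply Finset.sum_congr rfl
  intro r hr
  have hr1 : 1 ≤ r := (mem_Icc.mp hr).1
  have hr2 : r ≤ n - 1 := (mem_Icc.mp hr).2
  have hexp : n - r - 1 = n - 1 - r := by omega
  have hrne : (r : ℝ) ≠ 0 := by exact_mod_cast (by omega : r ≠ 0)
  rw [dInfty, hexp, hcast, eq_div_iff hmne]
  rw [div_eq_mul_inv, mul_inv, one_mul]
  have h1 : (r : ℝ) * ((r:ℝ))⁻¹ = 1 := mul_inv_cancel₀ hrne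
  calc (r:ℝ) * ((n - 1).choose r : ℝ) * z ^ (n - 1 - r) * (1 - z) ^ (r - 1) *
        ((((n-1:ℕ):ℝ))⁻¹ * ((r:ℝ))⁻¹) * ((n-1:ℕ):ℝ)
      = ((n - 1).choose r : ℝ) * z ^ (n - 1 - r) * (1 - z) ^ (r - 1) *
        ((r:ℝ) * ((r:ℝ))⁻¹) * (((n-1:ℕ):ℝ) * (((n-1:ℕ):ℝ))⁻¹) := by ring
    _ = _ := by rw [h1, mul_inv_cancel₀ hmne]; ring

lemma integrableOn_log_Ioc : IntegrableOn Real.log (Set.Ioc 0 1) volume := by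
  have hg : IntegrableOn (fun z : ℝ => 2 * z ^ (-(1/2) : ℝ)) (Set.Ioc 0 1) volume := by
    have := (intervalIntegral.intervalIntegrable_rpow' (a := 0) (b := 1)
      (by norm_num : (-1 : ℝ) < -(1/2)))
    have h2 := ((intervalIntegrable_iff_integrableOn_Ioc_of_le zero_le_one).mp this)
    exact h2.const_mul 2
  apply Integrable.mono hg
  · exact Real.measurable_log.aestronglyMeasurable
  · rw [ae_restrict_iff' measurableSet_Ioc]
    filter_upwards with z hz
    obtain ⟨hz0, hz1⟩ := hz
    have hrp : (0:ℝ) < z ^ (-(1/2) : ℝ) := Real.rpow_pos_of_pos hz0 _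
    have hlogle : Real.log z ≤ 0 := Real.log_nonpos hz0.le hz1
    rw [Real.norm_eq_abs, Real.norm_eq_abs, abs_of_nonpos hlogle,
      abs_of_nonneg (by positivity)]
    have hkey : Real.log (z ^ (-(1/2) : ℝ)) ≤ z ^ (-(1/2) : ℝ) - 1 :=
      Real.log_le_sub_one_of_pos hrp
    rw [Real.log_rpow hz0] at hkey
    nlinarith

lemma intervalIntegrable_log01 : IntervalIntegrable Real.log volume 0 1 :=
  (intervalIntegrable_iff_integrableOn_Ioc_of_le zero_le_one).mpr integrableOn_log_Ioc

lemma integral_log01 : ∫ z in (0:ℝ)..1, Real.log z = -1 := by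
  have hcont : ContinuousOn (fun z : ℝ => z * Real.log z - z) (Set.Icc 0 1) :=
    (Real.continuous_mul_log.sub continuous_id).continuousOn
  have hderiv : ∀ x ∈ Set.Ioo (0:ℝ) 1,
      HasDerivWithinAt (fun z : ℝ => z * Real.log z - z) (Real.log x) (Set.Ioi x) x := by
    intro x hx
    have h1 : HasDerivAt (fun z : ℝ => z * Real.log z - z) (Real.log x) x := by
      have := ((Real.hasDerivAt_mul_log (ne_of_gt hx.1)).sub (hasDerivAt_id x))
      rwa [add_sub_cancel_right] at this
    exact h1.hasDerivWithinAt
  have := intervalIntegral.integral_eq_sub_of_hasDeriv_right_of_le zero_le_one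
    hcont hderiv intervalIntegrable_log01
  simpa using this

lemma intervalIntegrable_log_one_sub :
    IntervalIntegrable (fun z : ℝ => Real.log (1 - z)) volume 0 1 := by
  have := (intervalIntegrable_log01.comp_sub_left 1)
  exact (by simpa using this :
    IntervalIntegrable (fun x => Real.log (1 - x)) volume 1 0).symm

lemma integral_log_one_sub : ∫ z in (0:ℝ)..1, Real.log (1 - z) = -1 := by
  have := intervalIntegral.integral_comp_sub_left (a := 0) (b := 1) Real.log 1
  simp only [sub_zero, sub_self] at this
  rw [this, integral_log01]

lemma sum_pow_pos {m : ℕ} (hm : 1 ≤ m) {z : ℝ} (hz : 0 ≤ z) :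
    (1:ℝ) ≤ ∑ k ∈ range m, z ^ k := by
  have h0 : (0:ℕ) ∈ range m := by simp; omega
  calc (1:ℝ) = z ^ 0 := by simp
    _ ≤ ∑ k ∈ range m, z ^ k :=
        Finset.single_le_sum (fun k _ => pow_nonneg hz k) h0

lemma key_eq {n : ℕ} (hn : 2 ≤ n) :
    (∫ z in (0:ℝ)..1, Real.log (aFun n (dInfty n) z)) + Real.log ((n : ℝ) - 1)
      = ∫ z in (0:ℝ)..1, Real.log (∑ k ∈ range (n - 1), z ^ k) := by
  have hm : 1 ≤ n - 1 := by omega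
  have hne : ((n : ℝ) - 1) ≠ 0 := by
    have : (2:ℝ) ≤ (n:ℝ) := by exact_mod_cast hn
    linarith
  have hSint : IntervalIntegrable
      (fun z : ℝ => Real.log (∑ k ∈ range (n - 1), z ^ k)) volume 0 1 := by
    apply ContinuousOn.intervalIntegrable
    apply ContinuousOn.log
    · exact (continuous_finset_sum _ (fun k _ => continuous_pow k)).continuousOn
    · intro z hz
      rw [Set.uIcc_of_le zero_le_one] at hz
      exact ne_of_gt (lt_of_lt_of_le one_pos (sum_pow_pos hm hz.1))
  have hcongr : ∫ z in (0:ℝ)..1, Real.log (aFun n (dInfty n) z)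
      = ∫ z in (0:ℝ)..1,
          (Real.log (∑ k ∈ range (n - 1), z ^ k) - Real.log ((n : ℝ) - 1)) := by
    apply intervalIntegral.integral_congr_ae
    have h1 : ∀ᵐ z : ℝ, z ≠ (1:ℝ) := by
      rw [ae_iff]
      simpa using measure_singleton (1:ℝ)
    filter_upwards [h1] with z hz hzI
    rw [Set.uIoc_of_le zero_le_one] at hzI
    have hSpos : (0:ℝ) < ∑ k ∈ range (n - 1), z ^ k :=
      lt_of_lt_of_le one_pos (sum_pow_pos hm hzI.1.le)
    rw [aFun_eq hn hz, Real.log_div (ne_of_gt hSpos) hne]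
  rw [hcongr, intervalIntegral.integral_sub hSint intervalIntegrable_const,
    intervalIntegral.integral_const]
  simp

lemma tendsto_int_logS :
    Tendsto (fun n : ℕ => ∫ z in (0:ℝ)..1, Real.log (∑ k ∈ range (n - 1), z ^ k))
      atTop (nhds 1) := by
  have hbound_int : Integrable (fun z : ℝ => -Real.log (1 - z))
      (volume.restrict (Set.Ioo (0:ℝ) 1)) := by
    have h1 : IntegrableOn (fun z : ℝ => Real.log (1 - z)) (Set.Ioc 0 1) volume :=
      (intervalIntegrable_iff_integrableOn_Ioc_of_le zero_le_one).mp
        intervalIntegrable_log_one_sub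
    exact ((h1.mono_set Set.Ioo_subset_Ioc_self).neg)
  have hone : ∫ z in Set.Ioo (0:ℝ) 1, -Real.log (1 - z) = 1 := by
    rw [← MeasureTheory.integral_Ioc_eq_integral_Ioo,
      ← intervalIntegral.integral_of_le zero_le_one, intervalIntegral.integral_neg,
      integral_log_one_sub]
    norm_num
  have hmain : Tendsto
      (fun n : ℕ => ∫ z in Set.Ioo (0:ℝ) 1, Real.log (∑ k ∈ range (n - 1), z ^ k))
      atTop (nhds (∫ z in Set.Ioo (0:ℝ) 1, -Real.log (1 - z))) := by
    apply MeasureTheory.tendsto_integral_of_dominated_convergence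
      (fun z : ℝ => -Real.log (1 - z))
    · intro n
      exact (Real.measurable_log.comp
        (continuous_finset_sum _ (fun k _ => continuous_pow k)).measurable).aestronglyMeasurable
    · exact hbound_int
    · intro n
      rw [ae_restrict_iff' measurableSet_Ioo]
      filter_upwards with z hz
      obtain ⟨hz0, hz1⟩ := hz
      have h1z : (0:ℝ) < 1 - z := by linarith
      have hbpos : 0 < -Real.log (1 - z) := by
        have := Real.log_neg h1z (by linarith)
        linarith
      rcases Nat.eq_zero_or_pos (n - 1) with hm | hm
      · simp [hm]
        linarith [hbpos]
      · have hSpos : (1:ℝ) ≤ ∑ k ∈ range (n - 1), z ^ k := sum_pow_pos hm hz0.le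
        have hlog_nonneg : 0 ≤ Real.log (∑ k ∈ range (n - 1), z ^ k) :=
          Real.log_nonneg hSpos
        rw [Real.norm_eq_abs, abs_of_nonneg hlog_nonneg]
        have hSle : ∑ k ∈ range (n - 1), z ^ k ≤ 1 / (1 - z) := by
          rw [le_div_iff₀ h1z]
          have h := geom_sum_mul z (n - 1)
          have hz1' : z ^ (n - 1) ≥ 0 := pow_nonneg hz0.le _
          nlinarith [h]
        calc Real.log (∑ k ∈ range (n - 1), z ^ k)
            ≤ Real.log (1 / (1 - z)) :=
              Real.log_le_log (lt_of_lt_of_le one_pos hSpos) hSle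
          _ = -Real.log (1 - z) := by
              rw [one_div, Real.log_inv]
    · rw [ae_restrict_iff' measurableSet_Ioo]
      filter_upwards with z hz
      obtain ⟨hz0, hz1⟩ := hz
      have hzne : z ≠ 1 := ne_of_lt hz1
      have h1z : (1:ℝ) - z ≠ 0 := sub_ne_zero.mpr (Ne.symm hzne)
      have hS : ∀ n : ℕ, ∑ k ∈ range (n - 1), z ^ k = (1 - z ^ (n - 1)) / (1 - z) := by
        intro n
        rw [geom_sum_eq hzne]
        rw [div_eq_div_iff (by intro h; apply hzne; linarith [sub_eq_zero.mp h]) h1z]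
        ring
      have hpow : Tendsto (fun n : ℕ => z ^ (n - 1)) atTop (nhds 0) :=
        (tendsto_pow_atTop_nhds_zero_of_lt_one hz0.le hz1).comp
          (tendsto_sub_atTop_nat 1)
      have hfrac : Tendsto (fun n : ℕ => (1 - z ^ (n - 1)) / (1 - z)) atTop
          (nhds ((1 - 0) / (1 - z))) :=
        (tendsto_const_nhds.sub hpow).div_const (1 - z)
      have hlog : Tendsto (fun n : ℕ => Real.log ((1 - z ^ (n - 1)) / (1 - z)))
          atTop (nhds (Real.log ((1 - 0) / (1 - z)))) :=
        hfrac.log (by rw [sub_zero]; exact div_ne_zero one_ne_zero h1z)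
      have hval : Real.log ((1 - (0:ℝ)) / (1 - z)) = -Real.log (1 - z) := by
        rw [sub_zero, one_div, Real.log_inv]
      rw [hval] at hlog
      exact hlog.congr (fun n => (congrArg Real.log (hS n)).symm)
  rw [hone] at hmain
  exact hmain.congr (fun n => by
    rw [← MeasureTheory.integral_Ioc_eq_integral_Ioo,
      ← intervalIntegral.integral_of_le zero_le_one])

end Aux

/-- `lim_{n→∞} ( ∫₀¹ log a(z; d^∞) dz + log(n−1) ) = 1`; in particular
`∫₀¹ log a(z; d^∞) dz ∼ −log(n−1)` as `n → ∞`. -/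
theorem log_aFun_dInfty_asymptotics :
    Filter.Tendsto
      (fun n : ℕ =>
        (∫ z in (0:ℝ)..1, Real.log (aFun n (dInfty n) z)) + Real.log ((n : ℝ) - 1))
      Filter.atTop (nhds 1) := by
  apply tendsto_int_logS.congr'
  filter_upwards [Filter.eventually_ge_atTop 2] with n hn
  exact (key_eq hn).symm
end

section
/- The equation log(2x/(1−x)) = (3/2)(3x − 1) has exactly one solution x in the open interval (1/3, 1), and this solution lies in the interval (0.810, 0.812). (This solution d_1* determines the robust prize schedule for n = 3 via d_2* = (1 − d_1*)/2, giving v* ≈ (0.9055, 0.0945, 0).) -/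
open Real Set

noncomputable def fAux (x : ℝ) : ℝ :=
  Real.log (2 * x) - Real.log (1 - x) - 3 / 2 * (3 * x - 1)

lemma fAux_eq {x : ℝ} (hx : x ∈ Set.Ioo (1/3 : ℝ) 1) :
    Real.log (2 * x / (1 - x)) = fAux x + 3 / 2 * (3 * x - 1) := by
  obtain ⟨h1, h2⟩ := hx
  rw [Real.log_div (by positivity) (by nlinarith)]
  simp [fAux]

lemma fAux_hasDeriv {x : ℝ} (hx0 : 0 < x) (hx1 : x < 1) :
    HasDerivAt fAux (1 / x + 1 / (1 - x) - 9 / 2) x := by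
  have h2x : (2 : ℝ) * x ≠ 0 := by positivity
  have h1x : (1 : ℝ) - x ≠ 0 := by linarith
  have hlog1 : HasDerivAt (fun y : ℝ => Real.log (2 * y)) (1 / x) x := by
    have hinner : HasDerivAt (fun y : ℝ => 2 * y) 2 x := by
      simpa using (hasDerivAt_id x).const_mul (2 : ℝ)
    have := (Real.hasDerivAt_log h2x).comp x hinner
    refine this.congr_deriv ?_
    field_simp
  have hlog2 : HasDerivAt (fun y : ℝ => Real.log (1 - y)) (-(1 / (1 - x))) x := by
    have hinner : HasDerivAt (fun y : ℝ => 1 - y) (-1) x := by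
      simpa using (hasDerivAt_id x).const_sub (1:ℝ)
    have := (Real.hasDerivAt_log h1x).comp x hinner
    refine this.congr_deriv ?_
    field_simp
  have hlin : HasDerivAt (fun y : ℝ => 3 / 2 * (3 * y - 1)) (9 / 2) x := by
    have : HasDerivAt (fun y : ℝ => 3 * y - 1) 3 x := by
      simpa using ((hasDerivAt_id x).const_mul (3:ℝ)).sub_const (1:ℝ)
    have h := this.const_mul (3/2 : ℝ)
    refine h.congr_deriv ?_
    norm_num
  have := (hlog1.sub hlog2).sub hlin
  refine this.congr_deriv ?_
  ring

lemma fAux_contOn {s : Set ℝ} (hs : s ⊆ Set.Ioo 0 1) : ContinuousOn fAux s := by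
  intro x hx
  obtain ⟨hx0, hx1⟩ := hs hx
  exact ((fAux_hasDeriv hx0 hx1).continuousAt).continuousWithinAt

lemma fAux_antiOn : StrictAntiOn fAux (Set.Icc (1/3 : ℝ) (2/3)) := by
  apply strictAntiOn_of_deriv_neg (convex_Icc _ _)
  · exact fAux_contOn (fun x hx => ⟨by linarith [hx.1], by linarith [hx.2]⟩)
  · intro x hx
    rw [interior_Icc] at hx
    obtain ⟨h1, h2⟩ := hx
    have hx0 : 0 < x := by linarith
    have hx1 : x < 1 := by linarith
    rw [(fAux_hasDeriv hx0 hx1).deriv]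
    have h1x : (0:ℝ) < 1 - x := by linarith
    rw [div_add_div _ _ (ne_of_gt hx0) (ne_of_gt h1x)]
    rw [sub_neg, div_lt_iff₀ (by positivity)]
    nlinarith

lemma fAux_monoOn : StrictMonoOn fAux (Set.Ico (2/3 : ℝ) 1) := by
  apply strictMonoOn_of_deriv_pos (convex_Ico _ _)
  · exact fAux_contOn (fun x hx => ⟨by linarith [hx.1], hx.2⟩)
  · intro x hx
    rw [interior_Ico] at hx
    obtain ⟨h1, h2⟩ := hx
    have hx0 : 0 < x := by linarith
    rw [(fAux_hasDeriv hx0 h2).deriv]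
    have h1x : (0:ℝ) < 1 - x := by linarith
    rw [div_add_div _ _ (ne_of_gt hx0) (ne_of_gt h1x)]
    rw [sub_pos, lt_div_iff₀ (by positivity)]
    nlinarith

lemma fAux_third : fAux (1/3) = 0 := by
  norm_num [fAux]

lemma exp_small_lb : (1.018125 : ℝ) ^ 8 ≤ Real.exp 0.145 := by
  have h : Real.exp 0.145 = Real.exp 0.018125 ^ (8:ℕ) := by
    rw [← Real.exp_nat_mul]; norm_num
  rw [h]
  apply pow_le_pow_left₀ (by norm_num)
  linarith [Real.add_one_le_exp (0.018125 : ℝ)]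

lemma exp_small_ub : Real.exp 0.154 ≤ (4000/3923 : ℝ) ^ 8 := by
  have h : Real.exp 0.154 = Real.exp 0.01925 ^ (8:ℕ) := by
    rw [← Real.exp_nat_mul]; norm_num
  have key : Real.exp 0.01925 ≤ 4000/3923 := by
    have h1 := Real.add_one_le_exp (-0.01925 : ℝ)
    have h2 : Real.exp (-0.01925 : ℝ) = (Real.exp 0.01925)⁻¹ := Real.exp_neg _
    rw [h2] at h1
    have h3 : (0:ℝ) < Real.exp 0.01925 := Real.exp_pos _
    rw [le_inv_comm₀ (by norm_num) h3] at h1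
    linarith [h1]
  rw [h]
  exact pow_le_pow_left₀ (Real.exp_pos _).le key 8

lemma exp_2145_lb : (162/19 : ℝ) < Real.exp 2.145 := by
  have h : Real.exp 2.145 = Real.exp 1 ^ (2:ℕ) * Real.exp 0.145 := by
    rw [← Real.exp_nat_mul, ← Real.exp_add]; norm_num
  rw [h]
  have he : (2.7182818283 : ℝ) < Real.exp 1 := Real.exp_one_gt_d9
  have h1 : (2.7182818283 : ℝ) ^ (2:ℕ) * (1.018125 : ℝ) ^ 8 ≤ Real.exp 1 ^ (2:ℕ) * Real.exp 0.145 := by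
    apply mul_le_mul (by apply pow_le_pow_left₀ (by norm_num) he.le)
      exp_small_lb (by positivity) (by positivity)
  calc (162/19 : ℝ) < (2.7182818283 : ℝ) ^ (2:ℕ) * (1.018125 : ℝ) ^ 8 := by norm_num
    _ ≤ _ := h1

lemma exp_2154_ub : Real.exp 2.154 < (1624/188 : ℝ) := by
  have h : Real.exp 2.154 = Real.exp 1 ^ (2:ℕ) * Real.exp 0.154 := by
    rw [← Real.exp_nat_mul, ← Real.exp_add]; norm_num
  rw [h]
  have he : Real.exp 1 < (2.7182818286 : ℝ) := Real.exp_one_lt_d9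
  have h1 : Real.exp 1 ^ (2:ℕ) * Real.exp 0.154 ≤ (2.7182818286 : ℝ) ^ (2:ℕ) * (4000/3923 : ℝ) ^ 8 := by
    apply mul_le_mul (by apply pow_le_pow_left₀ (Real.exp_pos _).le he.le)
      exp_small_ub (Real.exp_pos _).le (by positivity)
  calc Real.exp 1 ^ (2:ℕ) * Real.exp 0.154 ≤ (2.7182818286 : ℝ) ^ (2:ℕ) * (4000/3923 : ℝ) ^ 8 := h1
    _ < (1624/188 : ℝ) := by norm_num

lemma fAux_810 : fAux 0.810 < 0 := by
  unfold fAux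
  have h1 : Real.log (2 * 0.810) - Real.log (1 - 0.810) = Real.log (162/19) := by
    rw [← Real.log_div (by norm_num) (by norm_num)]
    norm_num
  rw [h1]
  have h2 : Real.log (162/19 : ℝ) < 2.145 := by
    rw [Real.log_lt_iff_lt_exp (by norm_num)]
    exact exp_2145_lb
  norm_num at h2 ⊢
  linarith

lemma fAux_812 : 0 < fAux 0.812 := by
  unfold fAux
  have h1 : Real.log (2 * 0.812) - Real.log (1 - 0.812) = Real.log (1624/188) := by
    rw [← Real.log_div (by norm_num) (by norm_num)]
    norm_num
  rw [h1]
  have h2 : (2.154 : ℝ) < Real.log (1624/188 : ℝ) := by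
    rw [Real.lt_log_iff_exp_lt (by norm_num)]
    exact exp_2154_ub
  norm_num at h2 ⊢
  linarith

lemma fAux_root_loc {x : ℝ} (hx : x ∈ Set.Ioo (1/3 : ℝ) 1) (hfx : fAux x = 0) :
    x ∈ Set.Ioo (0.810 : ℝ) 0.812 := by
  obtain ⟨h1, h2⟩ := hx
  have hgt : (2/3 : ℝ) < x := by
    by_contra h
    push_neg at h
    have := fAux_antiOn (by constructor <;> norm_num)
      (⟨le_of_lt h1, h⟩ : x ∈ Set.Icc (1/3 : ℝ) (2/3)) h1
    rw [fAux_third, hfx] at this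
    exact absurd this (lt_irrefl 0)
  constructor
  · by_contra h
    push_neg at h
    rcases lt_or_eq_of_le h with h' | h'
    · have := fAux_monoOn (⟨le_of_lt hgt, h2⟩ : x ∈ Set.Ico (2/3:ℝ) 1)
        (⟨by norm_num, by norm_num⟩ : (0.810:ℝ) ∈ Set.Ico (2/3:ℝ) 1) h'
      rw [hfx] at this
      linarith [fAux_810]
    · subst h'
      linarith [fAux_810]
  · by_contra h
    push_neg at h
    rcases lt_or_eq_of_le h with h' | h'
    · have := fAux_monoOn (⟨by norm_num, by norm_num⟩ : (0.812:ℝ) ∈ Set.Ico (2/3:ℝ) 1)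
        (⟨le_of_lt hgt, h2⟩ : x ∈ Set.Ico (2/3:ℝ) 1) h'
      rw [hfx] at this
      linarith [fAux_812]
    · subst h'
      linarith [fAux_812]

/-- The equation `log(2x/(1−x)) = (3/2)(3x − 1)` has exactly one
solution `x` in the open interval `(1/3, 1)`, and this solution lies in
`(0.810, 0.812)`. -/
theorem robust_n_three_equation_unique_root :
    (∃! x : ℝ, x ∈ Set.Ioo (1/3 : ℝ) 1 ∧
      Real.log (2 * x / (1 - x)) = 3 / 2 * (3 * x - 1)) ∧
    (∀ x : ℝ, x ∈ Set.Ioo (1/3 : ℝ) 1 →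
      Real.log (2 * x / (1 - x)) = 3 / 2 * (3 * x - 1) →
      x ∈ Set.Ioo (0.810 : ℝ) 0.812) := by
  have key : ∀ x : ℝ, x ∈ Set.Ioo (1/3 : ℝ) 1 →
      (Real.log (2 * x / (1 - x)) = 3 / 2 * (3 * x - 1) ↔ fAux x = 0) := by
    intro x hx
    rw [fAux_eq hx]
    constructor <;> intro h <;> linarith
  have part2 : ∀ x : ℝ, x ∈ Set.Ioo (1/3 : ℝ) 1 →
      Real.log (2 * x / (1 - x)) = 3 / 2 * (3 * x - 1) →
      x ∈ Set.Ioo (0.810 : ℝ) 0.812 := by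
    intro x hx hlog
    exact fAux_root_loc hx ((key x hx).mp hlog)
  refine ⟨?_, part2⟩
  -- existence via IVT
  have hcont : ContinuousOn fAux (Set.Icc (0.810 : ℝ) 0.812) :=
    fAux_contOn (fun x hx => ⟨by linarith [hx.1], by linarith [hx.2]⟩)
  have hivt := intermediate_value_Ioo (by norm_num : (0.810:ℝ) ≤ 0.812) hcont
  have h0 : (0:ℝ) ∈ Set.Ioo (fAux 0.810) (fAux 0.812) := ⟨fAux_810, fAux_812⟩
  obtain ⟨c, hc, hfc⟩ := hivt h0
  have hcI : c ∈ Set.Ioo (1/3 : ℝ) 1 := ⟨by linarith [hc.1], by linarith [hc.2]⟩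
  refine ⟨c, ⟨hcI, (key c hcI).mpr hfc⟩, ?_⟩
  intro y ⟨hyI, hylog⟩
  have hy0 : fAux y = 0 := (key y hyI).mp hylog
  have hyloc := fAux_root_loc hyI hy0
  have hcloc : c ∈ Set.Ioo (0.810 : ℝ) 0.812 := hc
  have hmemy : y ∈ Set.Ico (2/3 : ℝ) 1 := ⟨by linarith [hyloc.1], hyI.2⟩
  have hmemc : c ∈ Set.Ico (2/3 : ℝ) 1 := ⟨by linarith [hcloc.1], hcI.2⟩
  exact fAux_monoOn.injOn hmemy hmemc (by rw [hy0, hfc])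
end

section
/- For all real numbers d_1 > 0 and d_3 > 0, ∫_0^1 3z^2 / (3z^2·d_1 + 3(1−z)^2·d_3) dz = (1/(d_1 + d_3)) · [ 1 + (d_3/(d_1 + d_3))·log(d_1/d_3) − (π/2)·( d_3·(d_1 − d_3) ) / ( (d_1 + d_3)·√(d_1 d_3) ) ]. -/
open MeasureTheory Real

/-- For all real `d₁ > 0` and `d₃ > 0`,
`∫₀¹ 3z² / (3z² d₁ + 3(1−z)² d₃) dz
  = (1/(d₁+d₃)) [ 1 + (d₃/(d₁+d₃)) log(d₁/d₃) − (π/2) d₃(d₁−d₃) / ((d₁+d₃)√(d₁d₃)) ]`. -/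
theorem ell_one_four_players (d₁ d₃ : ℝ) (h₁ : 0 < d₁) (h₃ : 0 < d₃) :
    (∫ z in (0:ℝ)..1, 3 * z ^ 2 / (3 * z ^ 2 * d₁ + 3 * (1 - z) ^ 2 * d₃))
      = (1 / (d₁ + d₃)) *
          (1 + (d₃ / (d₁ + d₃)) * Real.log (d₁ / d₃) -
            (Real.pi / 2) * (d₃ * (d₁ - d₃)) / ((d₁ + d₃) * Real.sqrt (d₁ * d₃))) := by
  have hs : 0 < d₁ + d₃ := by linarith
  have hdd : 0 < d₁ * d₃ := mul_pos h₁ h₃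
  have hr : 0 < Real.sqrt (d₁ * d₃) := Real.sqrt_pos.mpr hdd
  set s := d₁ + d₃ with hs_def
  set r := Real.sqrt (d₁ * d₃) with hr_def
  have hr2 : r ^ 2 = d₁ * d₃ := Real.sq_sqrt hdd.le
  have hQ : ∀ z : ℝ, 0 < s * z ^ 2 - 2 * d₃ * z + d₃ := by
    intro z
    simp only [hs_def]
    nlinarith [sq_nonneg z, sq_nonneg (z - 1), mul_pos h₁ h₃, sq_nonneg (z - 1/2),
      mul_nonneg h₁.le (sq_nonneg z), mul_nonneg h₃.le (sq_nonneg (z - 1))]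
  set F : ℝ → ℝ := fun z => (z + (d₃ / s) * Real.log (s * z ^ 2 - 2 * d₃ * z + d₃)
      + (d₃ * (d₃ - d₁) / (s * r)) * Real.arctan ((s * z - d₃) / r)) / s with hF_def
  have hF : ∀ z : ℝ, HasDerivAt F
      (3 * z ^ 2 / (3 * z ^ 2 * d₁ + 3 * (1 - z) ^ 2 * d₃)) z := by
    intro z
    have hQz := hQ z
    have h1 : HasDerivAt (fun z : ℝ => s * z ^ 2 - 2 * d₃ * z + d₃)
        (2 * s * z - 2 * d₃) z := by
      have := (((hasDerivAt_pow 2 z).const_mul s).sub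
        ((hasDerivAt_id z).const_mul (2 * d₃))).add_const d₃
      exact this.congr_deriv (by push_cast; ring)
    have hlog : HasDerivAt (fun z : ℝ => Real.log (s * z ^ 2 - 2 * d₃ * z + d₃))
        ((2 * s * z - 2 * d₃) / (s * z ^ 2 - 2 * d₃ * z + d₃)) z := h1.log hQz.ne'
    have hu : HasDerivAt (fun z : ℝ => (s * z - d₃) / r) (s / r) z := by
      have := (((hasDerivAt_id z).const_mul s).sub_const d₃).div_const r
      exact this.congr_deriv (by ring)
    have harc : HasDerivAt (fun z : ℝ => Real.arctan ((s * z - d₃) / r))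
        (s / r / (1 + ((s * z - d₃) / r) ^ 2)) z := by
      have := hu.arctan
      convert this using 1; ring
    have h1u : 1 + ((s * z - d₃) / r) ^ 2 = s * (s * z ^ 2 - 2 * d₃ * z + d₃) / r ^ 2 := by
      rw [div_pow, hr2]
      field_simp
      simp only [hs_def]
      ring
    have hD : HasDerivAt F
        ((1 + (d₃ / s) * ((2 * s * z - 2 * d₃) / (s * z ^ 2 - 2 * d₃ * z + d₃))
          + (d₃ * (d₃ - d₁) / (s * r)) * (s / r / (1 + ((s * z - d₃) / r) ^ 2))) / s) z := by
      exact (((hasDerivAt_id z).add (hlog.const_mul (d₃ / s))).add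
        (harc.const_mul (d₃ * (d₃ - d₁) / (s * r)))).div_const s
    convert hD using 1
    rw [h1u]
    have h3Q : 3 * z ^ 2 * d₁ + 3 * (1 - z) ^ 2 * d₃
        = 3 * (s * z ^ 2 - 2 * d₃ * z + d₃) := by simp only [hs_def]; ring
    rw [h3Q]
    have harc2 : s / r / (s * (s * z ^ 2 - 2 * d₃ * z + d₃) / r ^ 2)
        = r / (s * z ^ 2 - 2 * d₃ * z + d₃) := by
      rw [div_div_div_eq]
      rw [div_eq_div_iff (by positivity) hQz.ne']
      ring
    rw [harc2]
    simp only [hs_def]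
    have hQ' : z * (z * (d₁ + d₃) - d₃ * 2) + d₃ ≠ 0 := by
      have := hQz; simp only [hs_def] at this; nlinarith
    field_simp
    ring
  have hInt : IntervalIntegrable
      (fun z : ℝ => 3 * z ^ 2 / (3 * z ^ 2 * d₁ + 3 * (1 - z) ^ 2 * d₃))
      MeasureTheory.volume 0 1 := by
    apply ContinuousOn.intervalIntegrable
    apply ContinuousOn.div (by fun_prop) (by fun_prop)
    intro z _
    have := hQ z
    have : 3 * z ^ 2 * d₁ + 3 * (1 - z) ^ 2 * d₃
        = 3 * (s * z ^ 2 - 2 * d₃ * z + d₃) := by simp only [hs_def]; ring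
    rw [this]
    positivity
  rw [intervalIntegral.integral_eq_sub_of_hasDerivAt (fun z _ => hF z) hInt]
  have e1 : s * (1:ℝ) ^ 2 - 2 * d₃ * 1 + d₃ = d₁ := by simp only [hs_def]; ring
  have e0 : s * (0:ℝ) ^ 2 - 2 * d₃ * 0 + d₃ = d₃ := by ring
  have e1' : s * (1:ℝ) - d₃ = d₁ := by simp only [hs_def]; ring
  have e0' : s * (0:ℝ) - d₃ = -d₃ := by ring
  have hinv : d₃ / r = (d₁ / r)⁻¹ := by
    rw [inv_div, div_eq_div_iff hr.ne' h₁.ne']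
    nlinarith [hr2]
  have hB : Real.arctan (d₃ / r) = Real.pi / 2 - Real.arctan (d₁ / r) := by
    rw [hinv, Real.arctan_inv_of_pos (div_pos h₁ hr)]
  simp only [hF_def, e1, e0, e1', e0', neg_div, Real.arctan_neg,
    Real.log_div h₁.ne' h₃.ne', hB]
  field_simp
  ring
end
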